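/- The difference system D = (d_j)_{j≥1}, where d_j = e_j − e_{j−1} (with the convention e_0 = 0), is a Schauder basis of ℓ₁ with L_m[D] ≈ m for m ∈ ℕ, and for every d ∈ ℕ the linear span of d_1,…,d_d equals the linear span of e_1,…,e_d, which with the ℓ₁ norm is isometrically ℓ₁^d. -/

import Mathlib

open Filter
open scoped ENNReal NNReal

noncomputable section

section BasisDefs

variable {X : Type*} [NormedAddCommGroup X] [NormedSpace ℝ X]

/-- `a` is the coefficient sequence of a norm-convergent expansion of `f` along `x`. -/
def ExpandsTo (x : ℕ → X) (a : ℕ → ℝ) (f : X) : Prop :=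
  Tendsto (fun N => ∑ j ∈ Finset.range N, a j • x j) atTop (nhds f)

/-- A Schauder basis of `X`: every vector admits a unique norm-convergent expansion. -/
def IsSchauderBasis (x : ℕ → X) : Prop :=
  ∀ f : X, ∃! a : ℕ → ℝ, ExpandsTo x a f

open Classical in
/-- The `j`-th coordinate functional associated with the sequence `x`. -/
def coordFn (x : ℕ → X) (j : ℕ) (f : X) : ℝ :=
  if h : ∃ a : ℕ → ℝ, ExpandsTo x a f then h.choose j else 0

/-- The coordinate projection onto a finite set `A` of indices. -/
def coordProj (x : ℕ → X) (A : Finset ℕ) (f : X) : X :=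
  ∑ j ∈ A, coordFn x j f • x j

/-- The `m`-th w-conditionality constant `L_m[x]`. -/
def Lconst (x : ℕ → X) (m : ℕ) : ℝ :=
  sSup {r : ℝ | ∃ f ∈ Submodule.span ℝ (x '' Set.Iio m), f ≠ 0 ∧
    ∃ A : Finset ℕ, r = ‖coordProj x A f‖ / ‖f‖}

/-- A semi-normalized sequence. -/
def SemiNormalized (x : ℕ → X) : Prop :=
  (∃ c > 0, ∀ j, c ≤ ‖x j‖) ∧ (∃ b, ∀ j, ‖x j‖ ≤ b)

/-- `A` is a greedy set for `f`: no coefficient outside `A` dominates one inside `A`. -/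
def GreedySet (x : ℕ → X) (f : X) (A : Finset ℕ) : Prop :=
  ∀ j ∉ A, ∀ k ∈ A, |coordFn x j f| ≤ |coordFn x k f|

/-- A quasi-greedy (Schauder) basis. -/
def QuasiGreedyBasis (x : ℕ → X) : Prop :=
  IsSchauderBasis x ∧ SemiNormalized x ∧
    ∃ C : ℝ, ∀ (f : X) (A : Finset ℕ), GreedySet x f A →
      ‖f - coordProj x A f‖ ≤ C * ‖f‖

/-- An almost greedy (Schauder) basis. -/
def AlmostGreedyBasis (x : ℕ → X) : Prop :=
  IsSchauderBasis x ∧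
    ∃ C : ℝ, ∀ (f : X) (A B : Finset ℕ), B.card ≤ A.card → GreedySet x f A →
      ‖f - coordProj x A f‖ ≤ C * ‖f - coordProj x B f‖

/-- The fundamental function `φ_m[x]`. -/
def fundFun (x : ℕ → X) (m : ℕ) : ℝ :=
  sSup {r : ℝ | ∃ A : Finset ℕ, A.card ≤ m ∧ r = ‖∑ j ∈ A, x j‖}

/-- A democratic basis. -/
def Democratic (x : ℕ → X) : Prop :=
  ∃ C : ℝ, ∀ (m : ℕ) (A : Finset ℕ), m ≤ A.card → fundFun x m ≤ C * ‖∑ j ∈ A, x j‖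

/-- A basis of type P: bounded partial sums and norms of the vectors bounded below. -/
def TypeP (x : ℕ → X) : Prop :=
  (∃ b, ∀ k : ℕ, ‖∑ j ∈ Finset.range k, x j‖ ≤ b) ∧ (∃ c > 0, ∀ j, c ≤ ‖x j‖)

/-- The closed linear span of the first `d` vectors of `x`. -/
def spanC (x : ℕ → X) (d : ℕ) : Submodule ℝ X :=
  (Submodule.span ℝ (x '' Set.Iio d)).topologicalClosure

end BasisDefs

/-- `Y` is isomorphic to a complemented subspace of `X`. -/
def ComplementedCopy (Y X : Type*) [NormedAddCommGroup Y] [NormedSpace ℝ Y]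
    [NormedAddCommGroup X] [NormedSpace ℝ X] : Prop :=
  ∃ (L : Y →L[ℝ] X) (R : X →L[ℝ] Y), ∀ f, R (L f) = f

/-- `Y` is isomorphic to a closed subspace of `X`. -/
def SubspaceCopy (Y X : Type*) [NormedAddCommGroup Y] [NormedSpace ℝ Y]
    [NormedAddCommGroup X] [NormedSpace ℝ X] : Prop :=
  ∃ (T : Y →L[ℝ] X) (c : ℝ), 0 < c ∧ ∀ f, c * ‖f‖ ≤ ‖T f‖

/-- The difference system `d_j = e_j - e_{j-1}` (with `e_0 = 0`) in `ℓ₁`,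
written with 0-based indices. -/
def diffVec : ℕ → lp (fun _ : ℕ => ℝ) 1
  | 0 => lp.single 1 0 1
  | (k + 1) => lp.single 1 (k + 1) 1 - lp.single 1 k 1


namespace Stmt5

abbrev L1 := lp (fun _ : ℕ => ℝ) 1

noncomputable def eV (k : ℕ) : L1 := lp.single 1 k (1 : ℝ)

lemma htp : (0:ℝ) < (1 : ℝ≥0∞).toReal := by norm_num

lemma eV_apply (k j : ℕ) : (eV k : ∀ _, ℝ) j = if j = k then 1 else 0 := by
  rcases eq_or_ne j k with h | h
  · subst h; simp [eV, lp.single_apply_self]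
  · simp [eV, lp.single_apply_ne _ _ _ h, h]

lemma single_eq_smul (k : ℕ) (x : ℝ) : lp.single 1 k x = x • eV k := by
  have h := lp.single_smul (E := fun _ : ℕ => ℝ) 1 k x (1 : ℝ)
  rw [eV, ← h, smul_eq_mul, mul_one]

lemma single_add (k : ℕ) (x y : ℝ) :
    (lp.single 1 k (x + y) : L1) = lp.single 1 k x + lp.single 1 k y := by
  rw [single_eq_smul, single_eq_smul, single_eq_smul, add_smul]

lemma single_zero (k : ℕ) : (lp.single 1 k (0 : ℝ) : L1) = 0 := by
  rw [single_eq_smul, zero_smul]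

lemma diffVec_apply (j k : ℕ) :
    (diffVec j : ∀ _, ℝ) k = (if j = k then 1 else 0) - (if j = k + 1 then 1 else 0) := by
  match j with
  | 0 =>
    rw [show diffVec 0 = eV 0 from rfl, eV_apply]
    have : (0 : ℕ) ≠ k + 1 := by omega
    simp [eq_comm, this]
  | (n+1) =>
    rw [show diffVec (n+1) = eV (n+1) - eV n from rfl, lp.coeFn_sub, Pi.sub_apply,
      eV_apply, eV_apply]
    split_ifs <;> first | omega | norm_num

lemma norm_eV (k : ℕ) : ‖eV k‖ = 1 := by
  have := lp.norm_single (p := 1) (E := fun _ : ℕ => ℝ) (by norm_num) k (1:ℝ)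
  simpa [eV] using this

lemma norm_diffVec_le (j : ℕ) : ‖diffVec j‖ ≤ 2 := by
  match j with
  | 0 => rw [show diffVec 0 = eV 0 from rfl, norm_eV]; norm_num
  | (n+1) =>
    rw [show diffVec (n+1) = eV (n+1) - eV n from rfl]
    calc ‖eV (n+1) - eV n‖ ≤ ‖eV (n+1)‖ + ‖eV n‖ := norm_sub_le _ _
    _ ≤ 2 := by rw [norm_eV, norm_eV]; norm_num

lemma summable_abs (f : L1) : Summable (fun k => |f k|) := by
  have := (lp.memℓp f).summable htp
  simpa [Real.rpow_one] using this

lemma summable' (f : L1) : Summable (fun k => f k) := (summable_abs f).of_abs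

lemma norm_eq (f : L1) : ‖f‖ = ∑' k, |f k| := by
  have := lp.norm_eq_tsum_rpow htp f
  simpa [Real.rpow_one] using this

noncomputable def tailSum (f : L1) (k : ℕ) : ℝ := ∑' j, f (j + k)

lemma summable_shift (f : L1) (k : ℕ) : Summable (fun j => f (j + k)) :=
  (summable_nat_add_iff k).mpr (summable' f)

lemma tailSum_sub (f : L1) (k : ℕ) : tailSum f k - tailSum f (k + 1) = f k := by
  have h := Summable.tsum_eq_zero_add (f := fun j => f (j + k)) (summable_shift f k)
  have harg : ∀ j : ℕ, j + 1 + k = j + (k + 1) := fun j => by omega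
  rw [tailSum, tailSum, h]
  simp only [Nat.zero_add, harg]
  ring

lemma abs_tailSum_le (f : L1) (k : ℕ) : |tailSum f k| ≤ ‖f‖ := by
  rw [norm_eq]
  calc |tailSum f k| ≤ ∑' j, |f (j + k)| := by
        have := norm_tsum_le_tsum_norm (f := fun j : ℕ => f (j + k)) ?_
        · simpa [Real.norm_eq_abs, tailSum] using this
        · simpa [Real.norm_eq_abs, Function.comp_def] using (summable_abs f).comp_injective
            (add_left_injective k)
  _ ≤ ∑' j, |f j| := by
        refine Summable.tsum_le_tsum_of_inj (fun j => j + k) (add_left_injective k)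
          (fun a _ => abs_nonneg _) (fun b => le_rfl) ((summable_abs f).comp_injective
          (add_left_injective k)) (summable_abs f)

lemma tailSum_tendsto (f : L1) : Tendsto (tailSum f) atTop (nhds 0) :=
  tendsto_sum_nat_add (fun k => f k)

lemma partial_formula (a : ℕ → ℝ) (N : ℕ) :
    ∑ j ∈ Finset.range (N + 1), a j • diffVec j
      = (∑ k ∈ Finset.range N, (a k - a (k + 1)) • eV k) + a N • eV N := by
  induction N with
  | zero => simp [show diffVec 0 = eV 0 from rfl]
  | succ N ih =>
    rw [Finset.sum_range_succ, ih, show diffVec (N+1) = eV (N+1) - eV N from rfl,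
      Finset.sum_range_succ, smul_sub, sub_smul]
    abel

lemma apply_sum (b : ℕ → ℝ) (s : Finset ℕ) (j : ℕ) :
    ((∑ k ∈ s, b k • eV k : L1) : ∀ _, ℝ) j = if j ∈ s then b j else 0 := by
  rw [lp.coeFn_sum]
  simp only [Finset.sum_apply, lp.coeFn_smul, Pi.smul_apply, eV_apply, smul_eq_mul,
    mul_ite, mul_one, mul_zero]
  exact Finset.sum_ite_eq s j b

lemma expandsTo_tailSum (f : L1) : ExpandsTo diffVec (tailSum f) f := by
  rw [ExpandsTo, ← tendsto_add_atTop_iff_nat 1]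
  have hform : (fun N => ∑ j ∈ Finset.range (N + 1), tailSum f j • diffVec j)
      = fun N => (∑ k ∈ Finset.range N, (tailSum f k - tailSum f (k+1)) • eV k)
          + tailSum f N • eV N := by
    funext N; exact partial_formula _ N
  rw [hform]
  have h1 : Tendsto (fun N => ∑ k ∈ Finset.range N, (tailSum f k - tailSum f (k+1)) • eV k)
      atTop (nhds f) := by
    have hs := (lp.hasSum_single (p := 1) (by norm_num) f).tendsto_sum_nat
    refine hs.congr fun N => Finset.sum_congr rfl fun k _ => ?_
    rw [single_eq_smul, tailSum_sub]
  have h2 : Tendsto (fun N => tailSum f N • eV N) atTop (nhds (0 : L1)) := by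
    refine squeeze_zero_norm (a := fun N => |tailSum f N|) (fun N => le_of_eq ?_) ?_
    · rw [norm_smul, norm_eV, mul_one, Real.norm_eq_abs]
    · simpa using (tailSum_tendsto f).abs
  simpa using h1.add h2

lemma coord_tendsto {g : ℕ → L1} {f : L1} (h : Tendsto g atTop (nhds f)) (k : ℕ) :
    Tendsto (fun N => (g N : ∀ _, ℝ) k) atTop (nhds (f k)) := by
  rw [tendsto_iff_dist_tendsto_zero] at h ⊢
  refine squeeze_zero (fun _ => dist_nonneg) (fun N => ?_) h
  rw [Real.dist_eq, dist_eq_norm]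
  have := lp.norm_apply_le_norm (p := 1) one_ne_zero (g N - f) k
  simpa [lp.coeFn_sub, Real.norm_eq_abs] using this

lemma expandsTo_unique {a : ℕ → ℝ} {f : L1} (h : ExpandsTo diffVec a f) : a = tailSum f := by
  rw [ExpandsTo] at h
  have h' : Tendsto (fun N => ∑ j ∈ Finset.range (N + 1), a j • diffVec j) atTop (nhds f) :=
    (tendsto_add_atTop_iff_nat 1).mpr h
  have hstep : ∀ k, a k - a (k + 1) = f k := by
    intro k
    have hc := coord_tendsto h' k
    have hev : ∀ᶠ N in atTop, ((∑ j ∈ Finset.range (N + 1), a j • diffVec j : L1) : ∀ _, ℝ) k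
        = a k - a (k + 1) := by
      filter_upwards [eventually_ge_atTop (k + 1)] with N hN
      rw [partial_formula, lp.coeFn_add, Pi.add_apply, apply_sum, lp.coeFn_smul,
        Pi.smul_apply, eV_apply]
      rw [if_pos (Finset.mem_range.mpr (by omega)), if_neg (by omega)]
      simp
    exact (tendsto_nhds_unique (hc.congr' hev) tendsto_const_nhds).symm
  have hB : Tendsto a atTop (nhds 0) := by
    have hd : Tendsto (fun N => ‖(∑ j ∈ Finset.range (N + 1), a j • diffVec j) - f‖)
        atTop (nhds 0) := by
      have := (tendsto_iff_dist_tendsto_zero).mp h'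
      simpa [dist_eq_norm] using this
    have hbound : ∀ N, |a N - f N| ≤ ‖(∑ j ∈ Finset.range (N + 1), a j • diffVec j) - f‖ := by
      intro N
      have hcoord : ((∑ j ∈ Finset.range (N + 1), a j • diffVec j : L1) : ∀ _, ℝ) N = a N := by
        rw [partial_formula, lp.coeFn_add, Pi.add_apply, apply_sum, lp.coeFn_smul,
          Pi.smul_apply, eV_apply]
        rw [if_neg (by simp), if_pos rfl]
        simp
      have h3 := lp.norm_apply_le_norm (p := 1) one_ne_zero
        ((∑ j ∈ Finset.range (N + 1), a j • diffVec j) - f) N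
      rw [lp.coeFn_sub, Pi.sub_apply, hcoord, Real.norm_eq_abs] at h3
      exact h3
    have h1 : Tendsto (fun N => a N - f N) atTop (nhds 0) := squeeze_zero_norm hbound hd
    have h2 : Tendsto (fun N => f N) atTop (nhds 0) := (summable' f).tendsto_atTop_zero
    simpa using h1.add h2
  funext k
  have htel : ∀ M, a k = (∑ j ∈ Finset.range M, f (j + k)) + a (k + M) := by
    intro M
    induction M with
    | zero => simp
    | succ M ih =>
      rw [Finset.sum_range_succ]
      have := hstep (k + M)
      have hMk : f (M + k) = f (k + M) := by rw [Nat.add_comm]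
      have hk1 : k + (M + 1) = k + M + 1 := by omega
      rw [hk1]
      rw [hMk]
      linarith [ih, this]
  have hR : Tendsto (fun M => (∑ j ∈ Finset.range M, f (j + k)) + a (k + M)) atTop
      (nhds (tailSum f k)) := by
    have h1 := (summable_shift f k).hasSum.tendsto_sum_nat
    have h2 : Tendsto (fun M => a (k + M)) atTop (nhds 0) := by
      have := hB.comp (tendsto_add_atTop_nat k)
      refine this.congr fun M => ?_
      simp [Function.comp, Nat.add_comm]
    simpa [tailSum] using h1.add h2
  have hconst : Tendsto (fun _ : ℕ => a k) atTop (nhds (tailSum f k)) :=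
    hR.congr fun M => (htel M).symm
  exact tendsto_nhds_unique tendsto_const_nhds hconst

lemma coordFn_eq (j : ℕ) (f : L1) : coordFn diffVec j f = tailSum f j := by
  have hex : ∃ a : ℕ → ℝ, ExpandsTo diffVec a f := ⟨tailSum f, expandsTo_tailSum f⟩
  rw [coordFn, dif_pos hex]
  exact congrFun (expandsTo_unique hex.choose_spec) j

lemma basis : IsSchauderBasis diffVec := fun f =>
  ⟨tailSum f, expandsTo_tailSum f, fun _ ha => expandsTo_unique ha⟩

lemma coordProj_eq (A : Finset ℕ) (f : L1) :
    coordProj diffVec A f = ∑ j ∈ A, tailSum f j • diffVec j := by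
  simp [coordProj, coordFn_eq]

lemma telescope (N : ℕ) : ∑ j ∈ Finset.range (N + 1), diffVec j = eV N := by
  induction N with
  | zero => simp [show diffVec 0 = eV 0 from rfl]
  | succ N ih =>
    rw [Finset.sum_range_succ, ih, show diffVec (N+1) = eV (N+1) - eV N from rfl]
    abel

lemma span_support {m : ℕ} {f : L1} (hf : f ∈ Submodule.span ℝ (diffVec '' Set.Iio m)) :
    ∀ k, m ≤ k → (f : ∀ _, ℝ) k = 0 := by
  induction hf using Submodule.span_induction with
  | mem x hx =>
    obtain ⟨j, hj, rfl⟩ := hx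
    intro k hk
    rw [diffVec_apply]
    rw [Set.mem_Iio] at hj
    rw [if_neg (by omega), if_neg (by omega)]
    ring
  | zero => intro k _; simp [lp.coeFn_zero]
  | add x y _ _ hx hy => intro k hk; rw [lp.coeFn_add, Pi.add_apply, hx k hk, hy k hk]; ring
  | smul c x _ hx => intro k hk; rw [lp.coeFn_smul, Pi.smul_apply, hx k hk]; simp

lemma tailSum_zero_of {m : ℕ} {f : L1} (h : ∀ k, m ≤ k → (f : ∀ _, ℝ) k = 0)
    {j : ℕ} (hj : m ≤ j) : tailSum f j = 0 := by
  rw [tailSum]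
  have : ∀ i : ℕ, f (i + j) = 0 := fun i => h _ (by omega)
  simp [this]

lemma proj_norm_le {m : ℕ} {f : L1} (hf : f ∈ Submodule.span ℝ (diffVec '' Set.Iio m))
    (A : Finset ℕ) : ‖coordProj diffVec A f‖ ≤ 2 * m * ‖f‖ := by
  rw [coordProj_eq]
  have hzero : ∀ j ∈ A, j ∉ A.filter (· < m) → tailSum f j • diffVec j = 0 := by
    intro j hjA hjf
    have hjm : ¬ j < m := fun hc => hjf (Finset.mem_filter.mpr ⟨hjA, hc⟩)
    rw [tailSum_zero_of (span_support hf) (by omega), zero_smul]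
  rw [← Finset.sum_subset (Finset.filter_subset _ A) hzero]
  calc ‖∑ j ∈ A.filter (· < m), tailSum f j • diffVec j‖
      ≤ ∑ j ∈ A.filter (· < m), ‖tailSum f j • diffVec j‖ := norm_sum_le _ _
    _ ≤ ∑ _j ∈ A.filter (· < m), 2 * ‖f‖ := by
        refine Finset.sum_le_sum fun j _ => ?_
        rw [norm_smul, Real.norm_eq_abs]
        calc |tailSum f j| * ‖diffVec j‖ ≤ ‖f‖ * 2 :=
              mul_le_mul (abs_tailSum_le f j) (norm_diffVec_le j) (norm_nonneg _) (norm_nonneg _)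
          _ = 2 * ‖f‖ := by ring
    _ = (A.filter (· < m)).card * (2 * ‖f‖) := by rw [Finset.sum_const, nsmul_eq_mul]
    _ ≤ m * (2 * ‖f‖) := by
        have hcard : (A.filter (· < m)).card ≤ m := by
          have hsub : A.filter (· < m) ⊆ Finset.range m := by
            intro j hj
            rw [Finset.mem_range]
            exact (Finset.mem_filter.mp hj).2
          simpa using Finset.card_le_card hsub
        have : ((A.filter (· < m)).card : ℝ) ≤ (m : ℝ) := by exact_mod_cast hcard
        exact mul_le_mul_of_nonneg_right this (by positivity)
    _ = 2 * m * ‖f‖ := by ring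

lemma bddAbove_Lset (m : ℕ) :
    BddAbove {r : ℝ | ∃ f ∈ Submodule.span ℝ (diffVec '' Set.Iio m), f ≠ 0 ∧
      ∃ A : Finset ℕ, r = ‖coordProj diffVec A f‖ / ‖f‖} := by
  refine ⟨2 * m, fun r hr => ?_⟩
  obtain ⟨f, hf, hne, A, rfl⟩ := hr
  rw [div_le_iff₀ (norm_pos_iff.mpr hne)]
  calc ‖coordProj diffVec A f‖ ≤ 2 * m * ‖f‖ := proj_norm_le hf A
    _ = 2 * ↑m * ‖f‖ := rfl

lemma Lconst_le (m : ℕ) : Lconst diffVec m ≤ 2 * m := by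
  rw [Lconst]
  refine Real.sSup_le (fun r hr => ?_) (by positivity)
  obtain ⟨f, hf, hne, A, rfl⟩ := hr
  rw [div_le_iff₀ (norm_pos_iff.mpr hne)]
  exact proj_norm_le hf A

lemma tailSum_eV {n j : ℕ} (hj : j ≤ n) : tailSum (eV n) j = 1 := by
  rw [tailSum]
  have hfun : (fun i : ℕ => (eV n : ∀ _, ℝ) (i + j)) = fun i : ℕ => if i = n - j then 1 else 0 := by
    funext i
    rw [eV_apply]
    congr 1
    rw [eq_iff_iff]
    omega
  rw [hfun]
  exact tsum_ite_eq (n - j) (fun _ => (1 : ℝ))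

lemma Lconst_ge_one {m : ℕ} (hm : 1 ≤ m) : 1 ≤ Lconst diffVec m := by
  rw [Lconst]
  refine le_csSup (bddAbove_Lset m) ?_
  refine ⟨eV 0, ?_, ?_, {0}, ?_⟩
  · refine Submodule.subset_span ⟨0, Set.mem_Iio.mpr (by omega), rfl⟩
  · intro hc
    have := norm_eV 0
    rw [hc, norm_zero] at this
    norm_num at this
  · rw [coordProj_eq, Finset.sum_singleton, tailSum_eV (le_refl 0), one_smul,
      show diffVec 0 = eV 0 from rfl, norm_eV, div_one]

lemma Lconst_ge (n : ℕ) : (n : ℝ) ≤ Lconst diffVec (n + 1) := by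
  set A : Finset ℕ := (Finset.range (n + 1)).filter (fun j => j % 2 = 0) with hA
  set g : L1 := ∑ j ∈ A, diffVec j with hg
  have hgk : ∀ k, (g : ∀ _, ℝ) k = (if k ∈ A then 1 else 0) - (if k + 1 ∈ A then 1 else 0) := by
    intro k
    rw [hg, lp.coeFn_sum]
    simp only [Finset.sum_apply, diffVec_apply, Finset.sum_sub_distrib]
    rw [Finset.sum_ite_eq' A k (fun _ => (1:ℝ)), Finset.sum_ite_eq' A (k+1) (fun _ => (1:ℝ))]
  have habs : ∀ k < n, |(g : ∀ _, ℝ) k| = 1 := by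
    intro k hk
    rw [hgk k]
    have hk1 : k ∈ Finset.range (n + 1) := Finset.mem_range.mpr (by omega)
    have hk2 : k + 1 ∈ Finset.range (n + 1) := Finset.mem_range.mpr (by omega)
    rcases Nat.even_or_odd k with he | ho
    · have he' := Nat.even_iff.mp he
      have h1 : k ∈ A := Finset.mem_filter.mpr ⟨hk1, he'⟩
      have h2 : k + 1 ∉ A := by
        intro hc
        have := (Finset.mem_filter.mp hc).2
        omega
      rw [if_pos h1, if_neg h2]; norm_num
    · have ho' := Nat.odd_iff.mp ho
      have h1 : k ∉ A := by
        intro hc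
        have := (Finset.mem_filter.mp hc).2
        omega
      have h2 : k + 1 ∈ A := Finset.mem_filter.mpr ⟨hk2, by omega⟩
      rw [if_neg h1, if_pos h2]; norm_num
  have hgnorm : (n : ℝ) ≤ ‖g‖ := by
    have hsum := lp.sum_rpow_le_norm_rpow htp g (Finset.range n)
    simp only [ENNReal.toReal_one, Real.rpow_one, Real.norm_eq_abs] at hsum
    calc (n : ℝ) = ∑ k ∈ Finset.range n, |(g : ∀ _, ℝ) k| := by
          rw [Finset.sum_congr rfl (fun k hk => habs k (Finset.mem_range.mp hk))]
          simp
      _ ≤ ‖g‖ := hsum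
  have hmem : ‖g‖ ∈ {r : ℝ | ∃ f ∈ Submodule.span ℝ (diffVec '' Set.Iio (n + 1)), f ≠ 0 ∧
      ∃ B : Finset ℕ, r = ‖coordProj diffVec B f‖ / ‖f‖} := by
    refine ⟨eV n, ?_, ?_, A, ?_⟩
    · rw [← telescope n]
      exact Submodule.sum_mem _ fun j hj => Submodule.subset_span
        ⟨j, Set.mem_Iio.mpr (Finset.mem_range.mp hj), rfl⟩
    · intro hc
      have := norm_eV n
      rw [hc, norm_zero] at this
      norm_num at this
    · rw [coordProj_eq]
      have : ∑ j ∈ A, tailSum (eV n) j • diffVec j = ∑ j ∈ A, diffVec j := by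
        refine Finset.sum_congr rfl fun j hj => ?_
        have hjn : j ≤ n := by
          have := Finset.mem_range.mp (Finset.mem_filter.mp hj).1
          omega
        rw [tailSum_eV hjn, one_smul]
      rw [this, norm_eV, div_one, hg]
  calc (n : ℝ) ≤ ‖g‖ := hgnorm
    _ ≤ Lconst diffVec (n + 1) := le_csSup (bddAbove_Lset (n + 1)) hmem

lemma span_eq (d : ℕ) :
    Submodule.span ℝ (diffVec '' Set.Iio d) =
      Submodule.span ℝ ((fun k => lp.single 1 k (1 : ℝ)) '' Set.Iio d) := by
  have heV : (fun k => lp.single 1 k (1 : ℝ)) = eV := rfl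
  rw [heV]
  apply le_antisymm
  · rw [Submodule.span_le]
    rintro x ⟨j, hj, rfl⟩
    rw [Set.mem_Iio] at hj
    match j with
    | 0 =>
      exact Submodule.subset_span ⟨0, Set.mem_Iio.mpr hj, rfl⟩
    | (n+1) =>
      have h1 : eV (n+1) ∈ Submodule.span ℝ (eV '' Set.Iio d) :=
        Submodule.subset_span ⟨n+1, Set.mem_Iio.mpr hj, rfl⟩
      have h2 : eV n ∈ Submodule.span ℝ (eV '' Set.Iio d) :=
        Submodule.subset_span ⟨n, Set.mem_Iio.mpr (by omega), rfl⟩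
      exact sub_mem h1 h2
  · rw [Submodule.span_le]
    rintro x ⟨k, hk, rfl⟩
    rw [Set.mem_Iio] at hk
    rw [SetLike.mem_coe, ← telescope k]
    exact Submodule.sum_mem _ fun j hj => Submodule.subset_span
      ⟨j, Set.mem_Iio.mpr (by have := Finset.mem_range.mp hj; omega), rfl⟩

noncomputable def coefF (d : ℕ) (x : PiLp 1 (fun _ : Fin d => ℝ)) (k : ℕ) : ℝ :=
  if h : k < d then x ⟨k, h⟩ else 0

noncomputable def Tmap (d : ℕ) : PiLp 1 (fun _ : Fin d => ℝ) →ₗ[ℝ] L1 where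
  toFun x := ∑ k ∈ Finset.range d, coefF d x k • eV k
  map_add' x y := by
    have h : ∀ k, coefF d (x + y) k = coefF d x k + coefF d y k := by
      intro k; unfold coefF; split_ifs with hh
      · rfl
      · simp
    simp only [h, add_smul, Finset.sum_add_distrib]
  map_smul' c x := by
    have h : ∀ k, coefF d (c • x) k = c * coefF d x k := by
      intro k; unfold coefF; split_ifs with hh
      · rfl
      · simp
    simp only [h, mul_smul, RingHom.id_apply]
    rw [Finset.smul_sum]

lemma Tmap_apply (d : ℕ) (x : PiLp 1 (fun _ : Fin d => ℝ)) :
    Tmap d x = ∑ k ∈ Finset.range d, coefF d x k • eV k := rfl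

lemma Tmap_norm (d : ℕ) (x : PiLp 1 (fun _ : Fin d => ℝ)) : ‖Tmap d x‖ = ‖x‖ := by
  have h1 : Tmap d x = ∑ k ∈ Finset.range d, lp.single 1 k (coefF d x k) := by
    rw [Tmap_apply]
    exact Finset.sum_congr rfl fun k _ => (single_eq_smul k _).symm
  rw [h1]
  have h2 := lp.norm_sum_single (p := 1) htp (coefF d x) (Finset.range d)
  simp only [ENNReal.toReal_one, Real.rpow_one, Real.norm_eq_abs] at h2
  have h3 : ‖∑ k ∈ Finset.range d, lp.single 1 k (coefF d x k)‖
      = ∑ k ∈ Finset.range d, |coefF d x k| := by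
    have hnn : (0:ℝ) ≤ ‖∑ k ∈ Finset.range d, lp.single 1 k (coefF d x k)‖ := norm_nonneg _
    linarith [h2]
  rw [h3, PiLp.norm_eq_sum htp]
  simp only [ENNReal.toReal_one, Real.rpow_one, Real.norm_eq_abs, one_div_one]
  rw [← Fin.sum_univ_eq_sum_range (fun k => |coefF d x k|) d]
  refine Finset.sum_congr rfl fun i _ => ?_
  unfold coefF
  rw [dif_pos i.isLt]

lemma Tmap_inj (d : ℕ) : Function.Injective (Tmap d) := by
  intro x y h
  have h2 := Tmap_norm d (x - y)
  rw [map_sub, h, sub_self, norm_zero] at h2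
  exact sub_eq_zero.mp (norm_eq_zero.mp h2.symm)

lemma Tmap_range (d : ℕ) :
    LinearMap.range (Tmap d) = Submodule.span ℝ (eV '' Set.Iio d) := by
  apply le_antisymm
  · rintro x hx
    obtain ⟨y, rfl⟩ := hx
    rw [Tmap_apply]
    exact Submodule.sum_mem _ fun k hk => Submodule.smul_mem _ _
      (Submodule.subset_span ⟨k, Set.mem_Iio.mpr (Finset.mem_range.mp hk), rfl⟩)
  · rw [Submodule.span_le]
    rintro x ⟨k, hk, rfl⟩
    rw [Set.mem_Iio] at hk
    rw [SetLike.mem_coe]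
    refine ⟨(WithLp.toLp 1 (Pi.single (⟨k, hk⟩ : Fin d) (1:ℝ)) : PiLp 1 (fun _ : Fin d => ℝ)), ?_⟩
    rw [Tmap_apply]
    have hc : ∀ j, coefF d (WithLp.toLp 1 (Pi.single (⟨k, hk⟩ : Fin d) (1:ℝ))) j = if j = k then 1 else 0 := by
      intro j
      unfold coefF
      split_ifs with h1 h2 h3
      · subst h2; simp [Pi.single_apply]
      · rw [PiLp.toLp_apply, Pi.single_apply, if_neg (by simp [Fin.mk.injEq]; omega)]
      · omega
      · rfl
    simp only [hc, ite_smul, one_smul, zero_smul]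
    rw [Finset.sum_ite_eq' (Finset.range d) k (fun j => eV j),
      if_pos (Finset.mem_range.mpr hk)]

lemma iso (d : ℕ) : Nonempty (↥(Submodule.span ℝ (diffVec '' Set.Iio d)) ≃ₗᵢ[ℝ]
    PiLp 1 (fun _ : Fin d => ℝ)) := by
  rw [span_eq d, show (fun k => lp.single 1 k (1 : ℝ)) = eV from rfl, ← Tmap_range d]
  refine ⟨LinearIsometryEquiv.symm ?_⟩
  exact
    { toLinearEquiv := LinearEquiv.ofInjective (Tmap d) (Tmap_inj d)
      norm_map' := fun x => by
        have hco : ((LinearEquiv.ofInjective (Tmap d) (Tmap_inj d) x :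
            ↥(LinearMap.range (Tmap d))) : L1) = Tmap d x := rfl
        calc ‖LinearEquiv.ofInjective (Tmap d) (Tmap_inj d) x‖
            = ‖((LinearEquiv.ofInjective (Tmap d) (Tmap_inj d) x :
                ↥(LinearMap.range (Tmap d))) : L1)‖ := rfl
          _ = ‖Tmap d x‖ := by rw [hco]
          _ = ‖x‖ := Tmap_norm d x }

end Stmt5

theorem statement_5 :
    IsSchauderBasis diffVec ∧
    (∃ C > 0, ∀ m : ℕ, 1 ≤ m →
      Lconst diffVec m ≤ C * m ∧ (m : ℝ) ≤ C * Lconst diffVec m) ∧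
    (∀ d : ℕ, 1 ≤ d →
      Submodule.span ℝ (diffVec '' Set.Iio d) =
        Submodule.span ℝ ((fun k => lp.single 1 k (1 : ℝ)) '' Set.Iio d) ∧
      Nonempty (↥(Submodule.span ℝ (diffVec '' Set.Iio d)) ≃ₗᵢ[ℝ]
        PiLp 1 (fun _ : Fin d => ℝ))) := by
  refine ⟨Stmt5.basis, ⟨2, by norm_num, fun m hm => ⟨?_, ?_⟩⟩,
    fun d _ => ⟨Stmt5.span_eq d, Stmt5.iso d⟩⟩
  · simpa using Stmt5.Lconst_le m
  · obtain ⟨n, rfl⟩ : ∃ n, m = n + 1 := ⟨m - 1, by omega⟩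
    have h1 := Stmt5.Lconst_ge n
    have h2 := Stmt5.Lconst_ge_one hm
    push_cast
    linarith
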